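/- arXiv:1604.07732 — 2 statements merged into one kernel-verified Lean document; each statement's English description precedes it below -/
import Mathlib

section
/- Let K be a compact subset of the region of boundedness of a sequence of closed operators (T_n). Then there exist M_K > 0 and n_K ∈ ℕ such that for all λ ∈ K and all n ≥ n_K, λ ∈ ρ(T_n) and ‖(T_n − λ)⁻¹‖ ≤ M_K. -/
open Filter Topology

/-- `R` is the (bounded, everywhere defined) resolvent `(T - λ)⁻¹` of the
(generally unbounded) operator `T` at the point `l`, i.e. `l ∈ ρ(T)` with
resolvent `R`. -/
def IsResolvent {F : Type*} [NormedAddCommGroup F] [NormedSpace ℂ F]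
    (T : F →ₗ.[ℂ] F) (l : ℂ) (R : F →L[ℂ] F) : Prop :=
  (∀ x : T.domain, R (T x - l • (x : F)) = (x : F)) ∧
  (∀ y : F, ∃ h : R y ∈ T.domain, T ⟨R y, h⟩ - l • R y = y)

/-- `l` belongs to the region of boundedness `Δ_b((T_n)_n)`: eventually
`l ∈ ρ(T_n)` with uniformly bounded resolvents. -/
def InRegionOfBoundedness {E : ℕ → Type*} [∀ n, NormedAddCommGroup (E n)]
    [∀ n, NormedSpace ℂ (E n)] (T : ∀ n, E n →ₗ.[ℂ] E n) (l : ℂ) : Prop :=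
  ∃ n₀ : ℕ, ∃ M : ℝ, ∀ n, n₀ ≤ n → ∃ R : E n →L[ℂ] E n,
    IsResolvent (T n) l R ∧ ‖R‖ ≤ M

lemma isResolvent_perturb {F : Type*} [NormedAddCommGroup F] [NormedSpace ℂ F]
    [CompleteSpace F] (T : F →ₗ.[ℂ] F) (l l' : ℂ) (R : F →L[ℂ] F)
    (h : IsResolvent T l R) (ht : ‖l' - l‖ * ‖R‖ ≤ 1/2) :
    ∃ S : F →L[ℂ] F, IsResolvent T l' S ∧ ‖S‖ ≤ 2 * ‖R‖ := by
  set c := l' - l with hc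
  set t : F →L[ℂ] F := c • R with htdef
  have htn : ‖t‖ ≤ 1/2 := by
    exact le_trans (norm_smul_le c R) ht
  have ht1 : ‖t‖ < 1 := lt_of_le_of_lt htn (by norm_num)
  set u : (F →L[ℂ] F)ˣ := Units.oneSub t ht1 with hu
  have huinv : (↑u⁻¹ : F →L[ℂ] F) = ∑' n : ℕ, t ^ n := rfl
  have huinv_norm : ‖(↑u⁻¹ : F →L[ℂ] F)‖ ≤ 2 := by
    rw [huinv]
    calc ‖∑' n : ℕ, t ^ n‖ ≤ ‖(1 : F →L[ℂ] F)‖ - 1 + (1 - ‖t‖)⁻¹ :=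
          tsum_geometric_le_of_norm_lt_one t ht1
      _ ≤ 2 := by
          have h1 : ‖(1 : F →L[ℂ] F)‖ ≤ 1 := ContinuousLinearMap.norm_id_le
          have h2 : (1 - ‖t‖)⁻¹ ≤ 2 := by
            rw [inv_le_comm₀ (by linarith) (by norm_num)]
            linarith
          linarith
  have hcomm : (R : F →L[ℂ] F) * ↑u⁻¹ = ↑u⁻¹ * R := by
    have h1 : Commute R t := by
      rw [htdef]; exact ((Commute.refl R).smul_right c)
    have h2 : Commute R (↑u : F →L[ℂ] F) := by
      rw [hu, Units.val_oneSub]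
      exact (Commute.one_right R).sub_right h1
    exact h2.units_inv_right
  refine ⟨(↑u⁻¹ : F →L[ℂ] F) * R, ⟨?_, ?_⟩, ?_⟩
  · intro x
    have key : R (T x - l' • (x : F)) = ((↑u : F →L[ℂ] F)) (x : F) := by
      have : T x - l' • (x : F) = (T x - l • (x : F)) - c • (x : F) := by
        rw [hc]; module
      rw [this, map_sub, h.1 x, hu, Units.val_oneSub]
      simp [htdef]
    show (↑u⁻¹ : F →L[ℂ] F) (R (T x - l' • (x : F))) = (x : F)
    rw [key]
    have := u.inv_mul
    calc (↑u⁻¹ : F →L[ℂ] F) ((↑u : F →L[ℂ] F) (x : F))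
        = ((↑u⁻¹ * ↑u : F →L[ℂ] F)) (x : F) := rfl
      _ = (x : F) := by rw [u.inv_mul]; rfl
  · intro y
    set z := (↑u⁻¹ : F →L[ℂ] F) y with hz
    have hSy : ((↑u⁻¹ : F →L[ℂ] F) * R) y = R z := by
      calc ((↑u⁻¹ : F →L[ℂ] F) * R) y = ((R : F →L[ℂ] F) * ↑u⁻¹) y := by rw [hcomm]
        _ = R z := rfl
    obtain ⟨hmem, heq⟩ := h.2 z
    rw [hSy]
    refine ⟨hmem, ?_⟩
    have huz : (↑u : F →L[ℂ] F) z = y := by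
      rw [hz]
      calc (↑u : F →L[ℂ] F) ((↑u⁻¹ : F →L[ℂ] F) y)
          = ((↑u * ↑u⁻¹ : F →L[ℂ] F)) y := rfl
        _ = y := by rw [u.mul_inv]; rfl
    have : T ⟨R z, hmem⟩ - l' • R z = (T ⟨R z, hmem⟩ - l • R z) - c • R z := by
      rw [hc]; module
    rw [this, heq]
    have : z - c • R z = (↑u : F →L[ℂ] F) z := by
      rw [hu, Units.val_oneSub]; simp [htdef]
    rw [this, huz]
  · calc ‖(↑u⁻¹ : F →L[ℂ] F) * R‖ ≤ ‖(↑u⁻¹ : F →L[ℂ] F)‖ * ‖R‖ := norm_mul_le _ _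
      _ ≤ 2 * ‖R‖ := by
          have := norm_nonneg R
          nlinarith [huinv_norm]

/-- **Uniform resolvent bound on compact subsets of the region of boundedness.**
If `K ⊆ Δ_b((T_n)_n)` is compact, then there are `M_K > 0` and `n_K` such that
for every `λ ∈ K` and every `n ≥ n_K` one has `λ ∈ ρ(T_n)` and
`‖(T_n - λ)⁻¹‖ ≤ M_K`. -/
theorem stmt1 {E : ℕ → Type*} [∀ n, NormedAddCommGroup (E n)]
    [∀ n, NormedSpace ℂ (E n)] [∀ n, CompleteSpace (E n)]
    (T : ∀ n, E n →ₗ.[ℂ] E n)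
    (hclosed : ∀ n, IsClosed ((T n).graph : Set (E n × E n)))
    (K : Set ℂ) (hK : IsCompact K)
    (hKb : ∀ l ∈ K, InRegionOfBoundedness T l) :
    ∃ M : ℝ, 0 < M ∧ ∃ nK : ℕ, ∀ l ∈ K, ∀ n, nK ≤ n →
      ∃ R : E n →L[ℂ] E n, IsResolvent (T n) l R ∧ ‖R‖ ≤ M := by
  choose n₀ M hM using fun i : K => hKb i i.2
  set M' : K → ℝ := fun i => max (M i) 0 + 1 with hM'
  have hM'pos : ∀ i, 0 < M' i := fun i => by positivity
  have hMM' : ∀ i, M i ≤ M' i := fun i => by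
    have := le_max_left (M i) 0; simp only [hM']; linarith
  have hrpos : ∀ i : K, 0 < (2 * M' i)⁻¹ := fun i => by
    have := hM'pos i; positivity
  have hcover : K ⊆ ⋃ i : K, Metric.ball (i : ℂ) (2 * M' i)⁻¹ := fun l hl =>
    Set.mem_iUnion.2 ⟨⟨l, hl⟩, Metric.mem_ball_self (hrpos ⟨l, hl⟩)⟩
  obtain ⟨t, ht⟩ := hK.elim_finite_subcover _ (fun i => Metric.isOpen_ball) hcover
  refine ⟨(t.sup fun i => ⌈2 * M' i⌉₊ : ℕ) + 1, by positivity, t.sup n₀, ?_⟩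
  intro l hl n hn
  obtain ⟨i, hit, hli⟩ : ∃ i ∈ t, l ∈ Metric.ball (i : ℂ) (2 * M' i)⁻¹ := by
    simpa using ht hl
  obtain ⟨R, hR, hRn⟩ := hM i n (le_trans (Finset.le_sup hit) hn)
  have hRM' : ‖R‖ ≤ M' i := le_trans hRn (hMM' i)
  have hsmall : ‖l - (i : ℂ)‖ * ‖R‖ ≤ 1 / 2 := by
    have h1 : ‖l - (i : ℂ)‖ < (2 * M' i)⁻¹ := by
      rwa [Metric.mem_ball, dist_eq_norm] at hli
    have h2 : ‖l - (i : ℂ)‖ * ‖R‖ ≤ (2 * M' i)⁻¹ * M' i := by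
      exact mul_le_mul h1.le hRM' (norm_nonneg R) (hrpos i).le
    have h3 : (2 * M' i)⁻¹ * M' i = 1 / 2 := by
      rw [mul_comm 2 (M' i), mul_inv, mul_assoc, mul_comm, mul_assoc,
        mul_inv_cancel₀ (hM'pos i).ne']
      norm_num
    linarith
  obtain ⟨S, hS, hSn⟩ := isResolvent_perturb (T n) (i : ℂ) l R hR hsmall
  refine ⟨S, hS, ?_⟩
  have h4 : 2 * M' i ≤ ((t.sup fun i => ⌈2 * M' i⌉₊ : ℕ) : ℝ) := by
    refine le_trans (Nat.le_ceil _) ?_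
    exact_mod_cast Finset.le_sup (f := fun i => ⌈2 * M' i⌉₊) hit
  linarith [hSn, hRM', norm_nonneg R]
end

section
/- Let E_0 = E and suppose A_n, A_n^(k) ∈ L(D_n, E_n) with sup_n ‖A_n^(k) − A_n‖ → 0 as k → ∞. If each sequence (A_n^(k))_{n∈ℕ} (for fixed k) is discretely compact, then (A_n)_{n∈ℕ} is discretely compact. -/
open Filter Topology

/-- Stummel's notion of a **discretely compact sequence** of bounded operators
`A_n ∈ L(D_n, E_n)` with `E_n` closed subspaces of `E₀` and limits sought in
the subspace `E`.  Here we shall use it with `E = ⊤`, corresponding to the case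
`E = E₀` of the paper. -/
def DiscretelyCompact {E₀ : Type*} [NormedAddCommGroup E₀] [NormedSpace ℂ E₀]
    (E : Submodule ℂ E₀) {D : ℕ → Type*} [∀ n, NormedAddCommGroup (D n)]
    [∀ n, NormedSpace ℂ (D n)] (En : ℕ → Submodule ℂ E₀)
    (A : ∀ n, D n →L[ℂ] En n) : Prop :=
  ∀ φ : ℕ → ℕ, StrictMono φ →
    ∀ x : ∀ k, D (φ k), (∃ M : ℝ, ∀ k, ‖x k‖ ≤ M) →
      ∃ ψ : ℕ → ℕ, StrictMono ψ ∧ ∃ y ∈ E,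
        Tendsto (fun k => ((A (φ (ψ k)) (x (ψ k)) : E₀))) atTop (𝓝 y)

/-- **Uniform limits of discretely compact sequences are discretely compact**
(case `E₀ = E`): if `A_n, A_n⁽ᵏ⁾ ∈ L(D_n, E_n)` with
`sup_n ‖A_n⁽ᵏ⁾ − A_n‖ → 0` as `k → ∞`, and each sequence `(A_n⁽ᵏ⁾)_n`
(for fixed `k`) is discretely compact, then `(A_n)_n` is discretely compact. -/
theorem stmt5 {E₀ : Type*} [NormedAddCommGroup E₀] [NormedSpace ℂ E₀]
    [CompleteSpace E₀] (En : ℕ → Submodule ℂ E₀)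
    (hEn : ∀ n, IsClosed ((En n : Set E₀)))
    {D : ℕ → Type*} [∀ n, NormedAddCommGroup (D n)] [∀ n, NormedSpace ℂ (D n)]
    (A : ∀ n, D n →L[ℂ] En n) (Ak : ℕ → ∀ n, D n →L[ℂ] En n)
    (hunif : ∀ ε : ℝ, 0 < ε → ∃ K : ℕ, ∀ k, K ≤ k → ∀ n, ‖Ak k n - A n‖ ≤ ε)
    (hAk : ∀ k, DiscretelyCompact (⊤ : Submodule ℂ E₀) En (Ak k)) :
    DiscretelyCompact (⊤ : Submodule ℂ E₀) En A := by
  intro φ hφ x hx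
  obtain ⟨M, hM⟩ := hx
  have hM0 : 0 ≤ M := le_trans (norm_nonneg _) (hM 0)
  -- one extraction step
  have step : ∀ m (f : ℕ → ℕ), StrictMono f → ∃ ψ : ℕ → ℕ, StrictMono ψ ∧
      ∃ y : E₀, Tendsto (fun k => ((Ak m (φ (f (ψ k))) (x (f (ψ k))) : E₀)))
        atTop (𝓝 y) := by
    intro m f hf
    obtain ⟨ψ, hψ, y, _, hy⟩ := hAk m (φ ∘ f) (hφ.comp hf) (fun k => x (f k))
      ⟨M, fun k => hM _⟩
    exact ⟨ψ, hψ, y, hy⟩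
  choose Ψ hΨ L hL using step
  -- nested subsequences
  let g : ℕ → {f : ℕ → ℕ // StrictMono f} := fun m =>
    Nat.rec ⟨id, strictMono_id⟩
      (fun j p => ⟨p.1 ∘ Ψ j p.1 p.2, p.2.comp (hΨ j p.1 p.2)⟩) m
  have hgs : ∀ j, (g (j+1)).1 = (g j).1 ∘ Ψ j (g j).1 (g j).2 := fun j => rfl
  have hconv : ∀ m, Tendsto
      (fun j => ((Ak m (φ ((g (m+1)).1 j)) (x ((g (m+1)).1 j)) : E₀)))
      atTop (𝓝 (L m (g m).1 (g m).2)) := fun m => hL m (g m).1 (g m).2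
  have dom : ∀ m j, m ≤ j → ∃ τ : ℕ → ℕ, StrictMono τ ∧ (∀ t, t ≤ τ t) ∧
      ∀ k, (g j).1 k = (g m).1 (τ k) := by
    intro m j h
    induction j, h using Nat.le_induction with
    | base => exact ⟨id, strictMono_id, fun t => le_rfl, fun k => rfl⟩
    | succ j hj ih =>
      obtain ⟨τ, hτ1, hτ2, hτ3⟩ := ih
      refine ⟨τ ∘ Ψ j (g j).1 (g j).2, hτ1.comp (hΨ j (g j).1 (g j).2),
        fun t => le_trans ((hΨ j (g j).1 (g j).2).le_apply) (hτ2 _), fun k => ?_⟩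
      rw [hgs j]
      exact hτ3 _
  -- diagonal sequence
  set d : ℕ → ℕ := fun j => (g (j+1)).1 j with hd
  have hdmono : StrictMono d := by
    apply strictMono_nat_of_lt_succ
    intro j
    have h1 : d (j+1) = (g (j+1)).1 (Ψ (j+1) (g (j+1)).1 (g (j+1)).2 (j+1)) :=
      congrFun (hgs (j+1)) (j+1)
    have h2 : (g (j+1)).1 j < (g (j+1)).1 (Ψ (j+1) (g (j+1)).1 (g (j+1)).2 (j+1)) :=
      (g (j+1)).2 (lt_of_lt_of_le (Nat.lt_succ_self j)
        (hΨ (j+1) (g (j+1)).1 (g (j+1)).2).le_apply)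
    rw [h1]
    exact h2
  -- for every m, the approximating sequence along the diagonal converges
  have hzm : ∀ m, Tendsto (fun j => ((Ak m (φ (d j)) (x (d j)) : E₀)))
      atTop (𝓝 (L m (g m).1 (g m).2)) := by
    intro m
    have hc := Metric.tendsto_atTop.mp (hconv m)
    rw [Metric.tendsto_atTop]
    intro ε hε
    obtain ⟨N, hN⟩ := hc ε hε
    refine ⟨max N m, fun j hj => ?_⟩
    have hmj : m + 1 ≤ j + 1 := by
      have := le_trans (le_max_right N m) hj; omega
    obtain ⟨τ, hτ1, hτ2, hτ3⟩ := dom (m+1) (j+1) hmj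
    have hdj : d j = (g (m+1)).1 (τ j) := hτ3 j
    have hτjN : N ≤ τ j := le_trans (le_trans (le_max_left N m) hj) (hτ2 j)
    have := hN (τ j) hτjN
    rw [hdj]
    exact this
  -- the diagonal sequence for A is Cauchy
  have hcauchy : CauchySeq (fun j => ((A (φ (d j)) (x (d j)) : E₀))) := by
    rw [Metric.cauchySeq_iff]
    intro ε hε
    have hε' : 0 < ε / (3 * (M + 1)) := by positivity
    obtain ⟨K, hK⟩ := hunif (ε / (3 * (M + 1))) hε'
    have hzc : CauchySeq (fun j => ((Ak K (φ (d j)) (x (d j)) : E₀))) :=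
      (hzm K).cauchySeq
    rw [Metric.cauchySeq_iff] at hzc
    obtain ⟨N, hN⟩ := hzc (ε / 3) (by positivity)
    refine ⟨N, fun i hi j hj => ?_⟩
    have key : ∀ t : ℕ, ‖((A (φ (d t)) (x (d t)) : E₀)) -
        ((Ak K (φ (d t)) (x (d t)) : E₀))‖ ≤ ε / 3 := by
      intro t
      have h1 : ((A (φ (d t)) (x (d t)) : E₀)) - ((Ak K (φ (d t)) (x (d t)) : E₀))
          = -(((Ak K (φ (d t)) - A (φ (d t))) (x (d t)) : E₀)) := by
        push_cast [ContinuousLinearMap.sub_apply]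
        abel
      rw [h1, norm_neg]
      have h2 : ‖((Ak K (φ (d t)) - A (φ (d t))) (x (d t)) : E₀)‖
          = ‖(Ak K (φ (d t)) - A (φ (d t))) (x (d t))‖ := rfl
      rw [h2]
      calc ‖(Ak K (φ (d t)) - A (φ (d t))) (x (d t))‖
          ≤ ‖Ak K (φ (d t)) - A (φ (d t))‖ * ‖x (d t)‖ :=
            (Ak K (φ (d t)) - A (φ (d t))).le_opNorm _
        _ ≤ (ε / (3 * (M + 1))) * M := by
            apply mul_le_mul (hK K le_rfl _) (hM _) (norm_nonneg _) (le_of_lt hε')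
        _ ≤ ε / 3 := by
            rw [div_mul_eq_mul_div, div_le_div_iff₀ (by positivity) (by norm_num)]
            nlinarith
    have tri : dist ((A (φ (d i)) (x (d i)) : E₀)) ((A (φ (d j)) (x (d j)) : E₀))
        ≤ dist ((A (φ (d i)) (x (d i)) : E₀)) ((Ak K (φ (d i)) (x (d i)) : E₀))
          + dist ((Ak K (φ (d i)) (x (d i)) : E₀)) ((Ak K (φ (d j)) (x (d j)) : E₀))
          + dist ((Ak K (φ (d j)) (x (d j)) : E₀)) ((A (φ (d j)) (x (d j)) : E₀)) :=
      dist_triangle4 _ _ _ _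
    have h3 := hN i hi j hj
    have h4 := key i
    have h5 := key j
    simp only [dist_eq_norm] at tri h3 ⊢
    have h5' : ‖((Ak K (φ (d j)) (x (d j)) : E₀)) - ((A (φ (d j)) (x (d j)) : E₀))‖
        ≤ ε / 3 := by rwa [norm_sub_rev]
    linarith
  obtain ⟨y, hy⟩ := cauchySeq_tendsto_of_complete hcauchy
  exact ⟨d, hdmono, y, Submodule.mem_top, hy⟩
end
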